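/- Let W = δ(U(π,u,yu)) ∈ T_I(G) satisfy ζ(W) = δ(U(π̂,u,ŷu)) ≠ W, where the ζ-move swaps terminal subpaths of π_{u_j}, π_{u_{j'}} at the central vertex of G_{J_p}. Then ℓ(ŷ) = ℓ(y) − 1 if the triple (π_{u_j},π_{u_{j'}},p) is a proper crossing or a defective noncrossing, and ℓ(ŷ) = ℓ(y) + 1 if it is a proper noncrossing or a defective crossing. -/

import Mathlib

/- Common combinatorial setup: star networks, covering path families,
   crossing/noncrossing statistics, and the base ring ℤ[q^{1/2},q^{-1/2}]. -/

open Equiv Finset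
open scoped Classical

noncomputable section

/-- The ring `ℤ[q^{1/2}, q^{-1/2}]`, realized as Laurent polynomials in the
variable `q^{1/2}` (so the exponent-`k` monomial is `q^{k/2}`). -/
abbrev R2 : Type := LaurentPolynomial ℤ

/-- `q^{k/2}`. -/
def Qp (k : ℤ) : R2 := LaurentPolynomial.T k

/-- `q`. -/
def qq : R2 := LaurentPolynomial.T 2

/-- Coxeter length of a permutation, i.e. its inversion number. -/
def len {n : ℕ} (w : Perm (Fin n)) : ℕ :=
  ((univ : Finset (Fin n × Fin n)).filter fun p => p.1 < p.2 ∧ w p.2 < w p.1).card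

/-- Membership in the interval `J = [a,b] ⊆ [n]`. -/
def memJ {n : ℕ} (J : Fin n × Fin n) (i : Fin n) : Prop := J.1 ≤ i ∧ i ≤ J.2

/-- Membership in the subgroup `S_J ≤ S_n` generated by the adjacent
transpositions `s_a, …, s_{b-1}` of the interval `J = [a,b]`; equivalently,
the permutations supported on `[a,b]`. -/
def inSJ {n : ℕ} (J : Fin n × Fin n) (w : Perm (Fin n)) : Prop :=
  ∀ i, w i ≠ i → memJ J i

/-- A path family covering the star network `G_{J_1} ∘ ⋯ ∘ G_{J_m}` is
faithfully encoded by the permutation of the wire positions realized at each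
simple-star factor: at factor `p` the paths whose current positions lie in
`J_p` pass through the central vertex and are permuted arbitrarily within
`J_p` (every entering and leaving edge being used exactly once), while all
other paths use their unique horizontal edge.  Thus a covering family is a
sequence `vs` of permutations with `vs p` supported on `J_p`. -/
def IsPathFamily {n m : ℕ} (Js : Fin m → Fin n × Fin n)
    (vs : Fin m → Perm (Fin n)) : Prop :=
  ∀ p, inSJ (Js p) (vs p)

/-- The position of the path starting at source `i` just before factor `k`
(as a permutation of sources). -/
def posAt {n m : ℕ} (vs : Fin m → Perm (Fin n)) (k : ℕ) : Perm (Fin n) :=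
  (((List.ofFn vs).take k).reverse).prod

/-- The type of a covering path family: the path starting at source `i`
terminates at sink `typeOf vs i`. -/
def typeOf {n m : ℕ} (vs : Fin m → Perm (Fin n)) : Perm (Fin n) := posAt vs m

/-- The path from source `i` passes through the central vertex of the factor
`G_{J_p}`. -/
def centeredAt {n m : ℕ} (Js : Fin m → Fin n × Fin n) (vs : Fin m → Perm (Fin n))
    (p : Fin m) (i : Fin n) : Prop :=
  (Js p).1 < (Js p).2 ∧ memJ (Js p) (posAt vs p i)

/-- The paths from sources `i` and `j` both pass through the central vertex of
the factor `G_{J_p}`. -/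
def meetAt {n m : ℕ} (Js : Fin m → Fin n × Fin n) (vs : Fin m → Perm (Fin n))
    (p : Fin m) (i j : Fin n) : Prop :=
  centeredAt Js vs p i ∧ centeredAt Js vs p j

/-- The triple `(π_i, π_j, p)` is a crossing: the two paths intersect at the
central vertex of `G_{J_p}` and cross there. -/
def crossingAt {n m : ℕ} (Js : Fin m → Fin n × Fin n) (vs : Fin m → Perm (Fin n))
    (p : Fin m) (i j : Fin n) : Prop :=
  meetAt Js vs p i j ∧
    ¬ ((posAt vs p i < posAt vs p j) ↔ (posAt vs (p.1 + 1) i < posAt vs (p.1 + 1) j))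

/-- `cross(π)`: the number of crossings of the path family. -/
def crossNum {n m : ℕ} (Js : Fin m → Fin n × Fin n)
    (vs : Fin m → Perm (Fin n)) : ℕ :=
  ((univ : Finset ((Fin n × Fin n) × Fin m)).filter fun x =>
    x.1.1 < x.1.2 ∧ crossingAt Js vs x.2 x.1.1 x.1.2).card

/-- The triple `(π_i, π_j, p)` is a noncrossing with `π_i` entering and
leaving the central vertex of `G_{J_p}` below `π_j`. -/
def noncrossBelow {n m : ℕ} (Js : Fin m → Fin n × Fin n) (vs : Fin m → Perm (Fin n))
    (p : Fin m) (i j : Fin n) : Prop :=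
  meetAt Js vs p i j ∧
    posAt vs p i < posAt vs p j ∧ posAt vs (p.1 + 1) i < posAt vs (p.1 + 1) j

/-- `incross(U)` for a tableau `U` containing the paths of `π`, recorded via
the function `col` assigning to each path (index) the index of the column of
`U` containing it: the number of inverted noncrossings, i.e. noncrossings
`(π_i, π_j, p)` (with `π_i` below `π_j`) such that `π_j` lies in an earlier
column of `U` than `π_i`. -/
def incrossNum {n m : ℕ} (Js : Fin m → Fin n × Fin n) (vs : Fin m → Perm (Fin n))
    (col : Fin n → ℕ) : ℕ :=
  ((univ : Finset ((Fin n × Fin n) × Fin m)).filter fun x =>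
    noncrossBelow Js vs x.2 x.1.1 x.1.2 ∧ col x.1.2 < col x.1.1).card

/-- The number of crossings of the two paths `π_i, π_j` strictly before the
factor `G_{J_p}`. -/
def crossBefore {n m : ℕ} (Js : Fin m → Fin n × Fin n) (vs : Fin m → Perm (Fin n))
    (p : Fin m) (i j : Fin n) : ℕ :=
  ((univ : Finset (Fin m)).filter fun k => k < p ∧ crossingAt Js vs k i j).card

/-- The triple `(π_i, π_j, p)` is defective: the paths meet at the central
vertex of `G_{J_p}` having previously crossed an odd number of times. -/
def defectiveAt {n m : ℕ} (Js : Fin m → Fin n × Fin n) (vs : Fin m → Perm (Fin n))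
    (p : Fin m) (i j : Fin n) : Prop :=
  meetAt Js vs p i j ∧ Odd (crossBefore Js vs p i j)

/-- `dfct(π)`: the number of defective triples of the path family. -/
def dfctNum {n m : ℕ} (Js : Fin m → Fin n × Fin n)
    (vs : Fin m → Perm (Fin n)) : ℕ :=
  ((univ : Finset ((Fin n × Fin n) × Fin m)).filter fun x =>
    x.1.1 < x.1.2 ∧ defectiveAt Js vs x.2 x.1.1 x.1.2).card

/-- `cdncross(W)`: the number of defective noncrossings between pairs of
paths appearing in the same column of the tableau recorded by `col`. -/
def cdncrossNum {n m : ℕ} (Js : Fin m → Fin n × Fin n) (vs : Fin m → Perm (Fin n))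
    (col : Fin n → ℕ) : ℕ :=
  ((univ : Finset ((Fin n × Fin n) × Fin m)).filter fun x =>
    x.1.1 < x.1.2 ∧ defectiveAt Js vs x.2 x.1.1 x.1.2 ∧
      ¬ crossingAt Js vs x.2 x.1.1 x.1.2 ∧ col x.1.1 = col x.1.2).card

/-- The adjacent transposition `s_{i+1}` (0-indexed: swaps positions `i` and
`i+1`). -/
def swp {n : ℕ} (i : ℕ) (h : i + 1 < n) : Perm (Fin n) :=
  Equiv.swap ⟨i, by omega⟩ ⟨i + 1, h⟩

end
/- Young subgroups, minimal coset representatives, the induced sign character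
`ε_q^λ`, and column-strict tableaux (encoded by column assignments). -/

noncomputable section
open Equiv Finset
open scoped Classical

/-- Given a composition `lam = (λ_1, …, λ_r)` of `n`, the index of the block
`B_k = [λ_1 + ⋯ + λ_{k-1} + 1, λ_1 + ⋯ + λ_k]` containing the (0-indexed)
position `i`. -/
def blockIdx (lam : List ℕ) (i : ℕ) : ℕ :=
  ((List.range lam.length).filter fun k => (lam.take (k + 1)).sum ≤ i).length

/-- Membership in the Young subgroup `S_λ`: the permutations preserving each
block `B_k`. -/
def inYoung {n : ℕ} (lam : List ℕ) (w : Perm (Fin n)) : Prop :=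
  ∀ i : Fin n, blockIdx lam ((w i : Fin n) : ℕ) = blockIdx lam (i : ℕ)

/-- `u` is the minimum-length representative of its coset `S_λ u`
(in the paper's conventions, of the left coset `u S_λ` used in the
factorization `w = w_- w^*`): `u` has no inversions whose two values lie in a
common block. -/
def isMinRep {n : ℕ} (lam : List ℕ) (u : Perm (Fin n)) : Prop :=
  ∀ i j : Fin n, i < j →
    blockIdx lam ((u i : Fin n) : ℕ) = blockIdx lam ((u j : Fin n) : ℕ) →
      u i < u j

/-- The induced sign character `ε_q^λ = sgn ↑_{H_λ(q)}^{H_n(q)}`, computed in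
the natural basis: `H_n(q)` is a free right `H_λ(q)`-module with basis
`{T_u}` indexed by the minimum-length coset representatives, every basis
element factors as `T_{τ∘u} = T_u T_τ` with `τ ∈ S_λ`, the sign character
sends `T_τ` to `(-1)^{ℓ(τ)}`, and the character of the induced module
`H_n(q) ⊗_{H_λ(q)} sgn` is obtained by summing the diagonal coefficients. -/
def epsChar {n : ℕ} {H : Type*} [Ring H] [Algebra R2 H] (lam : List ℕ)
    (T : Module.Basis (Perm (Fin n)) R2 H) (h : H) : R2 :=
  ∑ u ∈ (univ : Finset (Perm (Fin n))).filter (fun u => isMinRep lam u),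
    ∑ τ ∈ (univ : Finset (Perm (Fin n))).filter (fun τ => inYoung lam τ),
      (-1 : R2) ^ len τ * T.repr (h * T u) (τ * u)

/-- A column-strict tableau of shape `λᵗ` (whose columns therefore have
lengths `λ_1, …, λ_r`) filled with the paths of a covering path family of
type `typeOf vs`, encoded by the assignment `f` sending each path to the
index of its column: column `k` must have `λ_k` entries, and since the
entries of a column are arranged bottom-to-top in increasing order of source
index, column-strictness says that the sink indices of the paths in a common
column also increase with the source indices. -/
def IsColStrictAssign {n m : ℕ} (lam : List ℕ) (vs : Fin m → Perm (Fin n))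
    (f : Fin n → Fin lam.length) : Prop :=
  (∀ k : Fin lam.length,
      ((univ : Finset (Fin n)).filter fun i => f i = k).card = lam.get k) ∧
    ∀ i j : Fin n, f i = f j → i < j → typeOf vs i < typeOf vs j

end
/- The data of the involution ζ on the tableau set T_I.  An ordered set
partition `I = (I_1, …, I_r)` of `[n]` of type `λ` is encoded by the
permutation `u = u(I)` (increasing on each block `B_k`, with `I_k = u(B_k)`);
an element `U(π, u, yu)` of `U_I(G)` is encoded by the covering path family
`π` (with `typeOf π = u ∘ y ∘ u⁻¹` for some `y ∈ S_λ`); its image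
`W = δ(U(π,u,yu)) ∈ T_I(G)` is the tableau of shape `λᵗ` whose `k`-th column
contains the paths with sources in `I_k`, so the column of the path `i` in
`W` is `colOf lam u i`. -/

noncomputable section
open Equiv Finset
open scoped Classical

/-- The column of the path `π_i` in the tableau `δ(U(π,u,yu)) ∈ T_I`. -/
def colOf {n : ℕ} (lam : List ℕ) (u : Perm (Fin n)) (i : Fin n) : ℕ :=
  blockIdx lam ((u⁻¹ i : Fin n) : ℕ)

/-- Column `c` of the tableau `δ(U(π,u,yu))` is column-strict: its sink
indices increase (bottom to top) together with its source indices. -/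
def colStrictCol {n m : ℕ} (lam : List ℕ) (u : Perm (Fin n))
    (vs : Fin m → Perm (Fin n)) (c : ℕ) : Prop :=
  ∀ i i' : Fin n, colOf lam u i = c → colOf lam u i' = c → i < i' →
    typeOf vs i < typeOf vs i'

/-- The path family obtained by swapping the terminal subpaths of the paths
from sources `i` and `i'`, beginning at the central vertex of the factor
`G_{J_p}`: the permutation realized at factor `p` is composed with the
transposition of the two leaving positions. -/
def zetaSwap {n m : ℕ} (vs : Fin m → Perm (Fin n)) (p : Fin m)
    (i i' : Fin n) : Fin m → Perm (Fin n) :=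
  fun k => if k = p then
    Equiv.swap (posAt vs (p.1 + 1) i) (posAt vs (p.1 + 1) i') * vs p
  else vs k

/-- The data entering the definition of the involution `ζ = ζ_I` at a
non-column-strict tableau `W = δ(U(π,u,yu)) ∈ T_I(G)`:
`tc` is the greatest index of a non-column-strict column of `W`; `p` is the
greatest index such that at least two paths of column `tc` pass through the
interior vertex of `G_{J_p}`; and `j, j'` are the two positions in block `tc`
whose paths `π_{u_j}, π_{u_{j'}}` (through that vertex) have the
right-to-left lexicographically greatest pair of sink indices, normalized so
that the sink of `π_{u_{j'}}` is the larger.  Then `ζ(W)` is obtained from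
`W` by replacing `π` with `zetaSwap vs p (u j) (u j')`. -/
structure ZetaData {n m : ℕ} (Js : Fin m → Fin n × Fin n) (lam : List ℕ)
    (u : Perm (Fin n)) (vs : Fin m → Perm (Fin n)) : Type where
  tc : ℕ
  p : Fin m
  j : Fin n
  j' : Fin n
  htc : ¬ colStrictCol lam u vs tc
  htcMax : ∀ c : ℕ, tc < c → colStrictCol lam u vs c
  hpMeet : ∃ i i' : Fin n, i ≠ i' ∧ colOf lam u i = tc ∧ colOf lam u i' = tc ∧
    centeredAt Js vs p i ∧ centeredAt Js vs p i'
  hpMax : ∀ p' : Fin m, p < p' →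
    ¬ ∃ i i' : Fin n, i ≠ i' ∧ colOf lam u i = tc ∧ colOf lam u i' = tc ∧
      centeredAt Js vs p' i ∧ centeredAt Js vs p' i'
  hne : j ≠ j'
  hjcol : blockIdx lam (j : ℕ) = tc
  hjcol' : blockIdx lam (j' : ℕ) = tc
  hjcent : centeredAt Js vs p (u j)
  hjcent' : centeredAt Js vs p (u j')
  hord : typeOf vs (u j) < typeOf vs (u j')
  hmax : ∀ k k' : Fin n, k ≠ k' →
    blockIdx lam (k : ℕ) = tc → blockIdx lam (k' : ℕ) = tc →
    centeredAt Js vs p (u k) → centeredAt Js vs p (u k') →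
    typeOf vs (u k) < typeOf vs (u k') →
    (typeOf vs (u k') < typeOf vs (u j') ∨
      (k' = j' ∧ typeOf vs (u k) ≤ typeOf vs (u j)))

/-- The number `b` of paths of `π` which enter the factor `G_{J_p}` between
the paths from sources `i` and `i'`, and which also leave `G_{J_p}` between
the same two paths. -/
def betweenNum {n m : ℕ} (Js : Fin m → Fin n × Fin n) (vs : Fin m → Perm (Fin n))
    (p : Fin m) (i i' : Fin n) : ℕ :=
  ((univ : Finset (Fin n)).filter fun x =>
    x ≠ i ∧ x ≠ i' ∧ centeredAt Js vs p x ∧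
      (min (posAt vs p i) (posAt vs p i') < posAt vs p x ∧
        posAt vs p x < max (posAt vs p i) (posAt vs p i')) ∧
      (min (posAt vs (p.1 + 1) i) (posAt vs (p.1 + 1) i') < posAt vs (p.1 + 1) x ∧
        posAt vs (p.1 + 1) x < max (posAt vs (p.1 + 1) i) (posAt vs (p.1 + 1) i'))).card

end

/-! The move replaces the type `u y u⁻¹` by its product with the transposition of the sources
`u_j, u_{j'}`, so `ŷ = y (j j')` with `y j < y j'`. By the maximality in the choice of `p` and
`(j, j')`, no position between `j` and `j'` carries a value of `y` between `y j` and `y j'`, so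
right multiplication by `(j j')` changes the length by `+1` if `j < j'` and by `-1` if `j' < j`.
Since the two paths do not meet after `G_{J_p}`, they leave it in the order of their sinks, and
they enter it in the order of their sources corrected by the parity of their earlier crossings;
hence `j < j'` exactly when crossing at `p` agrees with having crossed an odd number of times
before. -/

open Equiv Finset

section Inversions

variable {α : Type*} [LinearOrder α]

lemma of_not_swap_apply_lt_swap_apply {a b x y : α} (hab : a < b) (hxy : x < y)
    (h : ¬ swap a b x < swap a b y) :
    (x = a ∧ y = b) ∨ (x = a ∧ a < y ∧ y < b) ∨ (a < x ∧ x < b ∧ y = b) := by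
  simp only [swap_apply_def] at h
  split_ifs at h <;> grind

def swapPairOrSelf (a b : α) (q : α × α) : α × α :=
  if swap a b q.1 < swap a b q.2 then (swap a b q.1, swap a b q.2) else q

lemma swapPairOrSelf_lt {a b : α} {q : α × α} (hq : q.1 < q.2) :
    (swapPairOrSelf a b q).1 < (swapPairOrSelf a b q).2 := by
  unfold swapPairOrSelf
  split_ifs with h <;> assumption

lemma swapPairOrSelf_swapPairOrSelf {a b : α} {q : α × α} (hq : q.1 < q.2) :
    swapPairOrSelf a b (swapPairOrSelf a b q) = q := by
  by_cases h : swap a b q.1 < swap a b q.2 <;> simp [swapPairOrSelf, h, hq]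

lemma swapPairOrSelf_self {a b : α} (hab : a < b) : swapPairOrSelf a b (a, b) = (a, b) := by
  simp [swapPairOrSelf, lt_asymm hab]

end Inversions

section Length

variable {n : ℕ}

/-- The pairs left in place by `swapPairOrSelf a b` are `(a, c)` and `(c, b)` with `a < c < b`,
and by hypothesis `w c` lies on the same side of `w a` as of `w b`. -/
lemma mul_swap_apply_lt_iff_swapPairOrSelf {w : Perm (Fin n)} {a b : Fin n} (hab : a < b)
    (hw : w a < w b)
    (hbet : ∀ c, a < c → c < b → ¬ (w a < w c ∧ w c < w b)) {q : Fin n × Fin n}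
    (hq : q.1 < q.2) (hne : q ≠ (a, b)) :
    (w * swap a b) q.2 < (w * swap a b) q.1 ↔
      w (swapPairOrSelf a b q).2 < w (swapPairOrSelf a b q).1 := by
  obtain ⟨x, y⟩ := q
  by_cases h : swap a b x < swap a b y
  · simp [swapPairOrSelf, h]
  have hside : ∀ c, a < c → c < b → w c < w a ∨ w b < w c := fun c hac hcb => by
    have := hbet c hac hcb
    have := w.injective.ne hac.ne'
    have := w.injective.ne hcb.ne
    grind
  simp only [swapPairOrSelf, h, if_false, Perm.mul_apply]
  rcases of_not_swap_apply_lt_swap_apply hab hq h with ⟨rfl, rfl⟩ | ⟨rfl, hay, hyb⟩ |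
    ⟨hax, hxb, rfl⟩
  · exact absurd rfl hne
  · rw [swap_apply_left, swap_apply_of_ne_of_ne hay.ne' hyb.ne]
    have := hside y hay hyb
    grind
  · rw [swap_apply_right, swap_apply_of_ne_of_ne hax.ne' hxb.ne]
    have := hside x hax hxb
    grind

/-- `swapPairOrSelf a b` is an involution matching the inversions of `w * (a b)` other than
`(a, b)` with those of `w`. -/
lemma len_mul_swap_of_lt (w : Perm (Fin n)) {a b : Fin n} (hab : a < b) (hw : w a < w b)
    (hbet : ∀ c, a < c → c < b → ¬ (w a < w c ∧ w c < w b)) :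
    len (w * swap a b) = len w + 1 := by
  have hab_mem : (a, b) ∈ (univ : Finset (Fin n × Fin n)).filter
      (fun q => q.1 < q.2 ∧ (w * swap a b) q.2 < (w * swap a b) q.1) :=
    mem_filter.2 ⟨mem_univ _, hab, by simpa using hw⟩
  unfold len
  rw [← card_erase_add_one hab_mem]
  congr 1
  refine card_bij' (fun q _ => swapPairOrSelf a b q) (fun q _ => swapPairOrSelf a b q)
    ?_ ?_ ?_ ?_
  · intro q hq
    simp only [mem_erase, mem_filter, mem_univ, true_and] at hq ⊢
    exact ⟨swapPairOrSelf_lt hq.2.1,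
      (mul_swap_apply_lt_iff_swapPairOrSelf hab hw hbet hq.2.1 hq.1).1 hq.2.2⟩
  · intro q hq
    simp only [mem_erase, mem_filter, mem_univ, true_and] at hq ⊢
    have hq_ne : q ≠ (a, b) := by rintro rfl; exact lt_asymm hw hq.2
    have hsq_ne : swapPairOrSelf a b q ≠ (a, b) := fun h => hq_ne <| by
      rw [← swapPairOrSelf_swapPairOrSelf hq.1, h, swapPairOrSelf_self hab]
    refine ⟨hsq_ne, swapPairOrSelf_lt hq.1, ?_⟩
    rw [mul_swap_apply_lt_iff_swapPairOrSelf hab hw hbet (swapPairOrSelf_lt hq.1) hsq_ne,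
      swapPairOrSelf_swapPairOrSelf hq.1]
    exact hq.2
  · exact fun q hq => swapPairOrSelf_swapPairOrSelf (mem_filter.1 (mem_of_mem_erase hq)).2.1
  · exact fun q hq => swapPairOrSelf_swapPairOrSelf (mem_filter.1 hq).2.1

lemma len_mul_swap_of_gt (w : Perm (Fin n)) {a b : Fin n} (hab : a < b) (hw : w b < w a)
    (hbet : ∀ c, a < c → c < b → ¬ (w b < w c ∧ w c < w a)) :
    len (w * swap a b) + 1 = len w := by
  have h := len_mul_swap_of_lt (w * swap a b) hab (by simpa using hw) fun c hac hcb => by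
    simpa [swap_apply_of_ne_of_ne hac.ne' hcb.ne] using hbet c hac hcb
  rwa [mul_assoc, swap_mul_self, mul_one, eq_comm] at h

end Length

section PathFamilies

variable {n m : ℕ} {Js : Fin m → Fin n × Fin n} {vs : Fin m → Perm (Fin n)}

lemma posAt_zero (vs : Fin m → Perm (Fin n)) : posAt vs 0 = 1 := by
  simp [posAt]

lemma posAt_succ (vs : Fin m → Perm (Fin n)) {k : ℕ} (hk : k < m) :
    posAt vs (k + 1) = vs ⟨k, hk⟩ * posAt vs k := by
  simp [posAt, List.take_add_one, hk]

lemma posAt_succ_apply (vs : Fin m → Perm (Fin n)) (p : Fin m) (x : Fin n) :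
    posAt vs (p + 1) x = vs p (posAt vs p x) := by
  simp [posAt_succ vs p.2]

lemma memJ.lt_of_ne {J : Fin n × Fin n} {x y : Fin n} (hx : memJ J x) (hy : memJ J y)
    (hxy : x ≠ y) : J.1 < J.2 := by
  unfold memJ at hx hy
  grind

lemma memJ.lt_iff_of_not_memJ {J : Fin n × Fin n} {x y z : Fin n} (hx : memJ J x)
    (hy : memJ J y) (hz : ¬ memJ J z) : x < z ↔ y < z := by
  unfold memJ at hx hy hz
  grind

lemma memJ.gt_iff_of_not_memJ {J : Fin n × Fin n} {x y z : Fin n} (hx : memJ J x)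
    (hy : memJ J y) (hz : ¬ memJ J z) : z < x ↔ z < y := by
  unfold memJ at hx hy hz
  grind

lemma IsPathFamily.apply_eq_of_not_memJ (hvs : IsPathFamily Js vs) (p : Fin m) {x : Fin n}
    (hx : ¬ memJ (Js p) x) : vs p x = x :=
  by_contra fun hne => hx (hvs p x hne)

lemma IsPathFamily.memJ_apply_iff (hvs : IsPathFamily Js vs) (p : Fin m) {x : Fin n} :
    memJ (Js p) (vs p x) ↔ memJ (Js p) x := by
  by_cases hx : memJ (Js p) x
  · refine iff_of_true (by_contra fun h => h ?_) hx
    rwa [(vs p).injective (hvs.apply_eq_of_not_memJ p h)]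
  · rw [hvs.apply_eq_of_not_memJ p hx]

lemma IsPathFamily.centeredAt_of_between (hvs : IsPathFamily Js vs) {p : Fin m} {i i' x : Fin n}
    (hi : centeredAt Js vs p i) (hi' : centeredAt Js vs p i')
    (hix : posAt vs (p + 1) i < posAt vs (p + 1) x)
    (hxi' : posAt vs (p + 1) x < posAt vs (p + 1) i') : centeredAt Js vs p x := by
  refine ⟨hi.1, ?_⟩
  have hJi := (hvs.memJ_apply_iff p).2 hi.2
  have hJi' := (hvs.memJ_apply_iff p).2 hi'.2
  simp only [posAt_succ_apply] at hix hxi'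
  rw [← hvs.memJ_apply_iff p]
  exact ⟨hJi.1.trans hix.le, hxi'.le.trans hJi'.2⟩

lemma IsPathFamily.posAt_succ_lt_iff_of_not_meetAt (hvs : IsPathFamily Js vs) (p : Fin m)
    {i i' : Fin n} (hne : i ≠ i') (hmeet : ¬ meetAt Js vs p i i') :
    posAt vs (p + 1) i < posAt vs (p + 1) i' ↔ posAt vs p i < posAt vs p i' := by
  simp only [posAt_succ_apply]
  set x := posAt vs p i
  set x' := posAt vs p i'
  have hxx' : x ≠ x' := (posAt vs p).injective.ne hne
  by_cases hx : memJ (Js p) x <;> by_cases hx' : memJ (Js p) x'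
  · exact absurd ⟨⟨hx.lt_of_ne hx' hxx', hx⟩, ⟨hx.lt_of_ne hx' hxx', hx'⟩⟩ hmeet
  · rw [hvs.apply_eq_of_not_memJ p hx']
    exact ((hvs.memJ_apply_iff p).2 hx).lt_iff_of_not_memJ hx hx'
  · rw [hvs.apply_eq_of_not_memJ p hx]
    exact ((hvs.memJ_apply_iff p).2 hx').gt_iff_of_not_memJ hx' hx
  · rw [hvs.apply_eq_of_not_memJ p hx, hvs.apply_eq_of_not_memJ p hx']

lemma IsPathFamily.posAt_succ_lt_iff (hvs : IsPathFamily Js vs) (p : Fin m) {i i' : Fin n}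
    (hne : i ≠ i') :
    posAt vs (p + 1) i < posAt vs (p + 1) i' ↔
      (posAt vs p i < posAt vs p i' ↔ ¬ crossingAt Js vs p i i') := by
  by_cases hmeet : meetAt Js vs p i i'
  · simp only [crossingAt, hmeet, true_and, not_not]
    tauto
  · simp only [crossingAt, hmeet, false_and, not_false_eq_true, iff_true]
    exact hvs.posAt_succ_lt_iff_of_not_meetAt p hne hmeet

lemma IsPathFamily.posAt_lt_iff_typeOf_lt (hvs : IsPathFamily Js vs) {i i' : Fin n}
    (hne : i ≠ i') {k : ℕ} (hk : k ≤ m) (hmeet : ∀ q : Fin m, k ≤ q → ¬ meetAt Js vs q i i') :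
    posAt vs k i < posAt vs k i' ↔ typeOf vs i < typeOf vs i' := by
  induction hk using Nat.decreasingInduction with
  | self => rfl
  | of_succ k hk ih =>
    rw [← ih fun q hq => hmeet q (by omega)]
    exact (hvs.posAt_succ_lt_iff_of_not_meetAt ⟨k, hk⟩ hne (hmeet ⟨k, hk⟩ le_rfl)).symm

end PathFamilies

noncomputable section Crossings

open scoped Classical

variable {n m : ℕ} {Js : Fin m → Fin n × Fin n} {vs : Fin m → Perm (Fin n)}

/-- `crossBefore` indexed by a natural number, for induction over the factors. -/
def crossCount (Js : Fin m → Fin n × Fin n) (vs : Fin m → Perm (Fin n)) (i j : Fin n)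
    (k : ℕ) : ℕ :=
  #{q : Fin m | (q : ℕ) < k ∧ crossingAt Js vs q i j}

lemma crossCount_zero (i j : Fin n) : crossCount Js vs i j 0 = 0 := by
  simp [crossCount]

lemma crossCount_succ (i j : Fin n) {k : ℕ} (hk : k < m) :
    crossCount Js vs i j (k + 1) =
      crossCount Js vs i j k + if crossingAt Js vs ⟨k, hk⟩ i j then 1 else 0 := by
  have hlast : #{q : Fin m | (q : ℕ) = k ∧ crossingAt Js vs q i j} =
      if crossingAt Js vs ⟨k, hk⟩ i j then 1 else 0 := by
    have : ∀ q : Fin m, (q : ℕ) = k ↔ q = ⟨k, hk⟩ := fun q => by rw [Fin.ext_iff]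
    simp only [this, and_comm (a := _ = _), filter_and, filter_eq', mem_univ, if_true]
    split_ifs <;> simp_all
  rw [crossCount, crossCount, ← hlast, ← card_union_of_disjoint, ← filter_or]
  · simp only [Nat.lt_add_one_iff_lt_or_eq, or_and_right]
  · exact disjoint_filter.2 fun q _ h h' => by omega

lemma IsPathFamily.posAt_lt_iff_even_crossCount (hvs : IsPathFamily Js vs) {i i' : Fin n}
    (hne : i ≠ i') {k : ℕ} (hk : k ≤ m) :
    posAt vs k i < posAt vs k i' ↔ (i < i' ↔ Even (crossCount Js vs i i' k)) := by
  induction k with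
  | zero => simp [posAt_zero, crossCount_zero]
  | succ k ih =>
    rw [hvs.posAt_succ_lt_iff ⟨k, hk⟩ hne, ih (by omega), crossCount_succ i i' hk]
    split_ifs <;> simp_all [Nat.even_add_one, - Nat.not_even_iff_odd]
    tauto

/-- Entering `G_{J_p}`, the two paths are in the order of their sources corrected by the parity
of their earlier crossings; leaving it, in the order of their sinks. -/
lemma IsPathFamily.lt_iff_crossingAt_iff_odd (hvs : IsPathFamily Js vs) {i i' : Fin n}
    (hne : i ≠ i') (p : Fin m) (hmeet : ∀ q : Fin m, p < q → ¬ meetAt Js vs q i i')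
    (hty : typeOf vs i < typeOf vs i') :
    i < i' ↔ (crossingAt Js vs p i i' ↔ Odd (crossBefore Js vs p i i')) := by
  have hstep := hvs.posAt_succ_lt_iff p hne
  rw [hvs.posAt_lt_iff_typeOf_lt hne p.2 fun q hq => hmeet q hq,
    hvs.posAt_lt_iff_even_crossCount hne p.2.le] at hstep
  have hcount : crossBefore Js vs p i i' = crossCount Js vs i i' p := rfl
  rw [hcount, ← Nat.not_even_iff_odd]
  tauto

end Crossings

section ZetaSwap

variable {n m : ℕ}

lemma posAt_zetaSwap_of_le (vs : Fin m → Perm (Fin n)) (p : Fin m) (i i' : Fin n) {k : ℕ}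
    (hk : k ≤ p) : posAt (zetaSwap vs p i i') k = posAt vs k := by
  induction k with
  | zero => simp [posAt_zero]
  | succ k ih =>
    have hkm : k < m := by omega
    have hkp : (⟨k, hkm⟩ : Fin m) ≠ p := Fin.ne_of_val_ne (show k ≠ p by omega)
    rw [posAt_succ _ hkm, posAt_succ _ hkm, ih (by omega), zetaSwap, if_neg hkp]

lemma posAt_zetaSwap_of_lt (vs : Fin m → Perm (Fin n)) (p : Fin m) (i i' : Fin n) {k : ℕ}
    (hpk : p < k) (hk : k ≤ m) : posAt (zetaSwap vs p i i') k = posAt vs k * swap i i' := by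
  induction k, hpk using Nat.le_induction with
  | base =>
    rw [posAt_succ _ p.2, posAt_succ _ p.2, posAt_zetaSwap_of_le vs p i i' le_rfl, zetaSwap,
      if_pos rfl, ← posAt_succ vs p.2, mul_assoc, ← posAt_succ vs p.2, swap_apply_apply,
      inv_mul_cancel_right]
  | succ k hpk ih =>
    have hkp : (⟨k, hk⟩ : Fin m) ≠ p := Fin.ne_of_val_ne (show k ≠ p by omega)
    rw [posAt_succ _ hk, posAt_succ _ hk, ih (by omega), zetaSwap, if_neg hkp, mul_assoc]

lemma typeOf_zetaSwap (vs : Fin m → Perm (Fin n)) (p : Fin m) (i i' : Fin n) :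
    typeOf (zetaSwap vs p i i') = typeOf vs * swap i i' :=
  posAt_zetaSwap_of_lt vs p i i' p.2 le_rfl

lemma eq_mul_swap_of_typeOf_zetaSwap {vs : Fin m → Perm (Fin n)} {p : Fin m}
    {u y yhat : Perm (Fin n)} {a b : Fin n} (hty : typeOf vs = u * y * u⁻¹)
    (htyhat : typeOf (zetaSwap vs p (u a) (u b)) = u * yhat * u⁻¹) :
    yhat = y * swap a b := by
  rw [typeOf_zetaSwap, hty, swap_apply_apply] at htyhat
  have hconj : u * yhat * u⁻¹ = u * (y * swap a b) * u⁻¹ := by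
    rw [← htyhat]
    group
  exact mul_left_cancel (mul_right_cancel hconj)

end ZetaSwap

lemma blockIdx_mono (lam : List ℕ) {i i' : ℕ} (h : i ≤ i') :
    blockIdx lam i ≤ blockIdx lam i' := by
  unfold blockIdx
  rw [← List.countP_eq_length_filter, ← List.countP_eq_length_filter]
  exact List.countP_mono_left fun k _ hk => by simp only [decide_eq_true_eq] at *; omega

lemma blockIdx_eq_of_le_of_le {lam : List ℕ} {a b c : ℕ} (hac : a ≤ c) (hcb : c ≤ b)
    (hab : blockIdx lam a = blockIdx lam b) : blockIdx lam c = blockIdx lam a :=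
  le_antisymm (hab ▸ blockIdx_mono lam hcb) (blockIdx_mono lam hac)

lemma colOf_apply_self {n : ℕ} (lam : List ℕ) (u : Perm (Fin n)) (x : Fin n) :
    colOf lam u (u x) = blockIdx lam x := by
  simp [colOf]

lemma apply_lt_apply_iff_of_blockIdx_eq {n : ℕ} {lam : List ℕ} {u : Perm (Fin n)}
    (hu : ∀ i j : Fin n, i < j → blockIdx lam (i : ℕ) = blockIdx lam (j : ℕ) → u i < u j)
    {x x' : Fin n} (hxx' : blockIdx lam x = blockIdx lam x') : u x < u x' ↔ x < x' := by
  have hmono : StrictMonoOn u {i : Fin n | blockIdx lam i = blockIdx lam x} :=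
    fun i hi i' hi' h => hu i i' h (hi.trans hi'.symm)
  exact hmono.lt_iff_lt rfl hxx'.symm

lemma typeOf_lt_iff_of_blockIdx_eq {n m : ℕ} {lam : List ℕ} {u y : Perm (Fin n)}
    {vs : Fin m → Perm (Fin n)}
    (hu : ∀ i j : Fin n, i < j → blockIdx lam (i : ℕ) = blockIdx lam (j : ℕ) → u i < u j)
    (hy : inYoung lam y) (hty : typeOf vs = u * y * u⁻¹) {x x' : Fin n}
    (hxx' : blockIdx lam x = blockIdx lam x') :
    typeOf vs (u x) < typeOf vs (u x') ↔ y x < y x' := by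
  simp only [hty, Perm.mul_apply, Perm.coe_inv, symm_apply_apply]
  exact apply_lt_apply_iff_of_blockIdx_eq hu ((hy x).trans (hxx'.trans (hy x').symm))

namespace ZetaData

variable {n m : ℕ} {Js : Fin m → Fin n × Fin n} {lam : List ℕ} {u : Perm (Fin n)}
  {vs : Fin m → Perm (Fin n)}

lemma not_meetAt_of_lt (Z : ZetaData Js lam u vs) {x x' : Fin n} (hne : x ≠ x')
    (hx : blockIdx lam x = Z.tc) (hx' : blockIdx lam x' = Z.tc) {q : Fin m} (hq : Z.p < q) :
    ¬ meetAt Js vs q (u x) (u x') := fun h =>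
  Z.hpMax q hq ⟨u x, u x', u.injective.ne hne, by rwa [colOf_apply_self],
    by rwa [colOf_apply_self], h.1, h.2⟩

/-- Such a path `π_{u_k}` would stay between `π_{u_j}` and `π_{u_{j'}}` after `G_{J_p}`, hence
pass through its central vertex, contradicting the maximality in the choice of `(j, j')`. -/
lemma not_typeOf_between (hvs : IsPathFamily Js vs) (Z : ZetaData Js lam u vs) {k : Fin n}
    (hk : blockIdx lam k = Z.tc) :
    ¬ (typeOf vs (u Z.j) < typeOf vs (u k) ∧ typeOf vs (u k) < typeOf vs (u Z.j')) := by
  rintro ⟨hjk, hkj'⟩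
  have hk_ne_j : k ≠ Z.j := by rintro rfl; exact lt_irrefl _ hjk
  have hk_ne_j' : k ≠ Z.j' := by rintro rfl; exact lt_irrefl _ hkj'
  have hafter : ∀ {x x' : Fin n}, x ≠ x' → blockIdx lam x = Z.tc → blockIdx lam x' = Z.tc →
      (posAt vs (Z.p + 1) (u x) < posAt vs (Z.p + 1) (u x') ↔
        typeOf vs (u x) < typeOf vs (u x')) := fun hne hx hx' =>
    hvs.posAt_lt_iff_typeOf_lt (u.injective.ne hne) Z.p.2 fun q hq =>
      Z.not_meetAt_of_lt hne hx hx' hq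
  have hcent : centeredAt Js vs Z.p (u k) :=
    hvs.centeredAt_of_between Z.hjcent Z.hjcent' ((hafter hk_ne_j.symm Z.hjcol hk).2 hjk)
      ((hafter hk_ne_j' hk Z.hjcol').2 hkj')
  rcases Z.hmax k Z.j' hk_ne_j' hk Z.hjcol' hcent Z.hjcent' hkj' with h | ⟨-, h⟩
  · exact lt_irrefl _ h
  · exact lt_irrefl _ (hjk.trans_le h)

lemma not_apply_between
    (hu : ∀ i j : Fin n, i < j → blockIdx lam (i : ℕ) = blockIdx lam (j : ℕ) → u i < u j)
    (hvs : IsPathFamily Js vs) {y : Perm (Fin n)} (hy : inYoung lam y)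
    (hty : typeOf vs = u * y * u⁻¹) (Z : ZetaData Js lam u vs) {c : Fin n}
    (hjc : min Z.j Z.j' < c) (hcj : c < max Z.j Z.j') :
    ¬ (y Z.j < y c ∧ y c < y Z.j') := by
  have hmin : blockIdx lam ((min Z.j Z.j' : Fin n) : ℕ) = Z.tc := by
    rcases min_choice Z.j Z.j' with h | h <;> rw [h]
    exacts [Z.hjcol, Z.hjcol']
  have hmax : blockIdx lam ((max Z.j Z.j' : Fin n) : ℕ) = Z.tc := by
    rcases max_choice Z.j Z.j' with h | h <;> rw [h]
    exacts [Z.hjcol, Z.hjcol']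
  have hc : blockIdx lam c = Z.tc :=
    (blockIdx_eq_of_le_of_le hjc.le hcj.le (hmin.trans hmax.symm)).trans hmin
  rw [← typeOf_lt_iff_of_blockIdx_eq hu hy hty (Z.hjcol.trans hc.symm),
    ← typeOf_lt_iff_of_blockIdx_eq hu hy hty (hc.trans Z.hjcol'.symm)]
  exact Z.not_typeOf_between hvs hc

end ZetaData

theorem zeta_move_length_cases_general
    {n m : ℕ} (Js : Fin m → Fin n × Fin n)
    (lam : List ℕ)
    (u : Perm (Fin n))
    (hu : ∀ i j : Fin n, i < j →
      blockIdx lam (i : ℕ) = blockIdx lam (j : ℕ) → u i < u j)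
    (vs : Fin m → Perm (Fin n)) (hvs : IsPathFamily Js vs)
    (y : Perm (Fin n)) (hy : inYoung lam y)
    (hty : typeOf vs = u * y * u⁻¹)
    (Z : ZetaData Js lam u vs)
    (yhat : Perm (Fin n))
    (htyhat : typeOf (zetaSwap vs Z.p (u Z.j) (u Z.j')) = u * yhat * u⁻¹) :
    ((crossingAt Js vs Z.p (u Z.j) (u Z.j') ∧
        ¬ Odd (crossBefore Js vs Z.p (u Z.j) (u Z.j'))) ∨
     (¬ crossingAt Js vs Z.p (u Z.j) (u Z.j') ∧
        Odd (crossBefore Js vs Z.p (u Z.j) (u Z.j'))) →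
      len yhat + 1 = len y) ∧
    ((¬ crossingAt Js vs Z.p (u Z.j) (u Z.j') ∧
        ¬ Odd (crossBefore Js vs Z.p (u Z.j) (u Z.j'))) ∨
     (crossingAt Js vs Z.p (u Z.j) (u Z.j') ∧
        Odd (crossBefore Js vs Z.p (u Z.j) (u Z.j'))) →
      len yhat = len y + 1) := by
  have hjj' : blockIdx lam Z.j = blockIdx lam Z.j' := Z.hjcol.trans Z.hjcol'.symm
  have hy_lt : y Z.j < y Z.j' := (typeOf_lt_iff_of_blockIdx_eq hu hy hty hjj').1 Z.hord
  have hsign : Z.j < Z.j' ↔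
      (crossingAt Js vs Z.p (u Z.j) (u Z.j') ↔ Odd (crossBefore Js vs Z.p (u Z.j) (u Z.j'))) := by
    rw [← apply_lt_apply_iff_of_blockIdx_eq hu hjj']
    exact hvs.lt_iff_crossingAt_iff_odd (u.injective.ne Z.hne) Z.p
      (fun _ => Z.not_meetAt_of_lt Z.hne Z.hjcol Z.hjcol') Z.hord
  rw [eq_mul_swap_of_typeOf_zetaSwap hty htyhat]
  rcases lt_or_gt_of_ne Z.hne with hlt | hgt
  · have hlen := len_mul_swap_of_lt y hlt hy_lt fun c h1 h2 =>
      Z.not_apply_between hu hvs hy hty (by rwa [min_eq_left hlt.le]) (by rwa [max_eq_right hlt.le])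
    exact ⟨fun h => absurd (hsign.1 hlt) (by tauto), fun _ => hlen⟩
  · have hlen := len_mul_swap_of_gt y hgt hy_lt fun c h1 h2 =>
      Z.not_apply_between hu hvs hy hty (by rwa [min_eq_right hgt.le]) (by rwa [max_eq_left hgt.le])
    rw [swap_comm] at hlen
    exact ⟨fun _ => hlen, fun h => absurd (hsign.2 (by tauto)) hgt.asymm⟩

/-- Lemma 5.3, identity (5.5) / `l:statids`, `eq:yid`.
Let `W = δ(U(π,u,yu)) ∈ T_I(G)` with `ζ(W) = δ(U(π̂,u,ŷu)) ≠ W`, where the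
`ζ`-move (recorded by `Z`) swaps the terminal subpaths of
`π_{u_j}, π_{u_{j'}}` at the central vertex of `G_{J_p}`, and `ŷ ∈ S_λ` is
determined by `typeOf π̂ = u ∘ ŷ ∘ u⁻¹`.  Then `ℓ(ŷ) = ℓ(y) − 1` if the
triple `(π_{u_j}, π_{u_{j'}}, p)` is a proper crossing or a defective
noncrossing, and `ℓ(ŷ) = ℓ(y) + 1` if it is a proper noncrossing or a
defective crossing. -/
theorem zeta_move_length_cases
    {n m : ℕ} (Js : Fin m → Fin n × Fin n) (hJs : ∀ p, (Js p).1 ≤ (Js p).2)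
    (lam : List ℕ) (hsum : lam.sum = n) (hpos : ∀ x ∈ lam, 0 < x)
    (hsort : lam.Pairwise (fun a b => b ≤ a))
    (u : Perm (Fin n))
    (hu : ∀ i j : Fin n, i < j →
      blockIdx lam (i : ℕ) = blockIdx lam (j : ℕ) → u i < u j)
    (vs : Fin m → Perm (Fin n)) (hvs : IsPathFamily Js vs)
    (y : Perm (Fin n)) (hy : inYoung lam y)
    (hty : typeOf vs = u * y * u⁻¹)
    (Z : ZetaData Js lam u vs)
    (yhat : Perm (Fin n)) (hyhat : inYoung lam yhat)
    (htyhat : typeOf (zetaSwap vs Z.p (u Z.j) (u Z.j')) = u * yhat * u⁻¹) :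
    ((crossingAt Js vs Z.p (u Z.j) (u Z.j') ∧
        ¬ Odd (crossBefore Js vs Z.p (u Z.j) (u Z.j'))) ∨
     (¬ crossingAt Js vs Z.p (u Z.j) (u Z.j') ∧
        Odd (crossBefore Js vs Z.p (u Z.j) (u Z.j'))) →
      len yhat + 1 = len y) ∧
    ((¬ crossingAt Js vs Z.p (u Z.j) (u Z.j') ∧
        ¬ Odd (crossBefore Js vs Z.p (u Z.j) (u Z.j'))) ∨
     (crossingAt Js vs Z.p (u Z.j) (u Z.j') ∧
        Odd (crossBefore Js vs Z.p (u Z.j) (u Z.j'))) →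
      len yhat = len y + 1) :=
  zeta_move_length_cases_general Js lam u hu vs hvs y hy hty Z yhat htyhat
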